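/- arXiv:2301.10661 — 2 statements merged into one kernel-verified Lean document; each statement's English description precedes it below -/
import Mathlib

section
/- Let p be an odd prime, φ the quadratic character of F_p, and n ≥ 1 with p ∤ 3n(3n-2). For any x ∈ F_p^× and α as below, Σ_{χ} g(χ^{3n})·g(φχ̄)·g(χ̄)·g(χ̄^{3n-2})·χ(α) = g(φ)·[ p·Σ_{χ} J(χ^{3n}, χ̄^{3n-2})·χ(4α) − (p-1)²·(1 + φ(α)·δ(φⁿ)) ], where both sums run over all multiplicative characters χ of F_p. -/
/-!
For `χ ∉ {1, φ}` three classical relations turn each summand into `g(φ) · p · J · χ(4α)`: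
the Gauss–Jacobi relation `g(χ^{3n}) g(χ̄^{3n-2}) = J(χ^{3n}, χ̄^{3n-2}) g(χ²)`, the
Hasse–Davenport relation `χ̄(4) g(χ̄) g(χ̄φ) = g(φ) g(χ̄²)`, and `g(χ²) g(χ̄²) = p`.
Hasse–Davenport for `m = 2` itself comes from `J(χ, φ) = χ(4) J(χ, χ)`: since `1 + φ(x)` counts
the square roots of `x`, `J(χ, φ) = Σ_u χ(1 - u²)`, and `u = 1 - 2y` gives `1 - u² = 4y(1 - y)`.
The two remaining characters `χ = 1` and `χ = φ` are evaluated directly using `g(1) = -1`,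
`J(1, 1) = p - 2`, `J(φ, φ) = -φ(-1)` and `g(φ)² = φ(-1) p`; they produce the correction term.
-/

open Finset
open scoped Classical

noncomputable def gsum (p : ℕ) [Fact p.Prime] (ζ : ℂ) (χ : MulChar (ZMod p) ℂ) : ℂ :=
  ∑ x : ZMod p, χ x * ζ ^ x.val

section FiniteField

variable {F : Type*} [Field F] {R : Type*} [CommRing R]

lemma four_ne_zero_of_ringChar_ne_two (hF : ringChar F ≠ 2) : (4 : F) ≠ 0 := by
  simpa [show (4 : F) = 2 ^ 2 by norm_num] using Ring.two_ne_zero hF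

lemma MulChar.apply_four_of_sq_eq_one (hF : ringChar F ≠ 2) {χ : MulChar F R} (hχ : χ ^ 2 = 1) :
    χ 4 = 1 := by
  rw [show (4 : F) = 2 ^ 2 by norm_num, map_pow, ← χ.pow_apply' two_ne_zero, hχ,
    MulChar.one_apply (Ring.two_ne_zero hF).isUnit]

lemma AddChar.IsPrimitive.ne_one {ψ : AddChar F R} (hψ : ψ.IsPrimitive) : ψ ≠ 1 :=
  fun h ↦ hψ one_ne_zero (by rw [AddChar.mulShift_one, h])

variable [Fintype F]

lemma MulChar.eq_of_sq_eq_one_of_ne_one [IsDomain R] {χ χ' : MulChar F R} (hχ : χ ^ 2 = 1)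
    (hχ' : χ' ^ 2 = 1) (h1 : χ ≠ 1) (h1' : χ' ≠ 1) : χ = χ' := by
  obtain ⟨g, hg⟩ := IsCyclic.exists_generator (α := Fˣ)
  have apply_gen : ∀ ψ : MulChar F R, ψ ^ 2 = 1 → ψ ≠ 1 → ψ g = -1 := by
    intro ψ hsq hne
    have : ψ g ^ 2 = 1 := by rw [← MulChar.pow_apply_coe, hsq, MulChar.one_apply_coe]
    refine (sq_eq_one_iff.mp this).resolve_left fun h ↦ hne ?_
    rwa [MulChar.eq_iff hg, MulChar.one_apply_coe]
  rw [MulChar.eq_iff hg, apply_gen χ hχ h1, apply_gen χ' hχ' h1']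

lemma gaussSum_mul_gaussSum_inv [IsDomain R] {χ : MulChar F R} (hχ : χ ≠ 1) {ψ : AddChar F R}
    (hψ : ψ.IsPrimitive) : gaussSum χ ψ * gaussSum χ⁻¹ ψ = χ (-1) * Fintype.card F := by
  rw [← mul_gaussSum_inv_eq_gaussSum χ⁻¹, mul_left_comm, gaussSum_mul_gaussSum_eq_card hχ hψ,
    MulChar.inv_apply', inv_neg_one]

lemma sum_apply_one_sub_sq (hF : ringChar F ≠ 2) (χ : MulChar F R) :
    ∑ u, χ (1 - u ^ 2) = χ 4 * jacobiSum χ χ := by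
  have affine_bijective : Function.Bijective fun y : F ↦ 1 - 2 * y := by
    refine Finite.injective_iff_bijective.mp fun a b hab ↦ ?_
    exact mul_left_cancel₀ (Ring.two_ne_zero hF) (by linear_combination -hab)
  calc ∑ u, χ (1 - u ^ 2) = ∑ y, χ (1 - (1 - 2 * y) ^ 2) :=
        (Fintype.sum_bijective _ affine_bijective _ _ fun _ ↦ rfl).symm
    _ = ∑ y, χ 4 * (χ y * χ (1 - y)) := by
        refine sum_congr rfl fun y _ ↦ ?_
        rw [← map_mul, ← map_mul]
        ring_nf
    _ = χ 4 * jacobiSum χ χ := by rw [jacobiSum, mul_sum]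

variable [DecidableEq F]

local notation "φ" => MulChar.ringHomComp (quadraticChar F) (Int.castRingHom R)

lemma quadraticChar_ringHomComp_ne_one [CharZero R] (hF : ringChar F ≠ 2) : φ ≠ 1 :=
  (MulChar.ringHomComp_ne_one_iff Int.cast_injective).mpr (quadraticChar_ne_one hF)

lemma eq_quadraticChar_of_sq_eq_one [IsDomain R] [CharZero R] (hF : ringChar F ≠ 2)
    {χ : MulChar F R} (hχ : χ ^ 2 = 1) (h1 : χ ≠ 1) : χ = φ :=
  MulChar.eq_of_sq_eq_one_of_ne_one hχ ((quadraticChar_isQuadratic F).comp _).sq_eq_one h1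
    (quadraticChar_ringHomComp_ne_one hF)

lemma sum_mul_quadraticChar_add_one (hF : ringChar F ≠ 2) (f : F → R) :
    ∑ x, f x * (φ x + 1) = ∑ u, f (u ^ 2) := by
  have card_sqrts : ∀ x, φ x + 1 = #{u | u ^ 2 = x} := by
    intro x
    have := congrArg (Int.cast : ℤ → R) (quadraticChar_card_sqrts hF x)
    simp only [Int.cast_natCast, Int.cast_add, Int.cast_one, Set.toFinset_ofPred] at this
    simp [this]
  calc ∑ x, f x * (φ x + 1) = ∑ x, ∑ u with u ^ 2 = x, f (u ^ 2) := by
        refine sum_congr rfl fun x _ ↦ ?_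
        rw [card_sqrts, mul_comm, ← nsmul_eq_mul, ← sum_const]
        exact sum_congr rfl fun u hu ↦ by rw [(mem_filter.mp hu).2]
    _ = ∑ u, f (u ^ 2) := sum_fiberwise univ (· ^ 2) (fun u ↦ f (u ^ 2))

lemma jacobiSum_quadraticChar [IsDomain R] (hF : ringChar F ≠ 2) {χ : MulChar F R}
    (hχ : χ ≠ 1) : jacobiSum χ φ = χ 4 * jacobiSum χ χ := by
  have sum_shift : ∑ x, χ (1 - x) = 0 :=
    (Fintype.sum_equiv (Equiv.subLeft 1) _ χ fun _ ↦ rfl).trans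
      (MulChar.sum_eq_zero_of_ne_one hχ)
  calc jacobiSum χ φ = ∑ x, χ (1 - x) * (φ x + 1) := by
        rw [jacobiSum_comm, jacobiSum]
        simp only [mul_add_one, sum_add_distrib, sum_shift, add_zero, mul_comm (φ _)]
    _ = ∑ u, χ (1 - u ^ 2) := sum_mul_quadraticChar_add_one hF _
    _ = χ 4 * jacobiSum χ χ := sum_apply_one_sub_sq hF χ

end FiniteField

section GaussSumProduct

variable {F : Type*} [Field F] [Fintype F] [DecidableEq F] {R : Type*} [Field R]

local notation "φ" => MulChar.ringHomComp (quadraticChar F) (Int.castRingHom R)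

lemma gaussSum_product_one (hF : ringChar F ≠ 2) (m : ℕ) {ψ : AddChar F R}
    (hψ : ψ.IsPrimitive) {α : F} (hα : α ≠ 0) :
    gaussSum ((1 : MulChar F R) ^ m) ψ * gaussSum (φ * 1⁻¹) ψ * gaussSum 1⁻¹ ψ *
        gaussSum ((1 : MulChar F R)⁻¹ ^ (m - 2)) ψ * (1 : MulChar F R) α =
      gaussSum φ ψ * (Fintype.card F *
          (jacobiSum ((1 : MulChar F R) ^ m) ((1 : MulChar F R)⁻¹ ^ (m - 2)) *
            (1 : MulChar F R) (4 * α))) -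
        gaussSum φ ψ * (Fintype.card F - 1) ^ 2 := by
  rw [MulChar.one_apply hα.isUnit,
    MulChar.one_apply (mul_ne_zero (four_ne_zero_of_ringChar_ne_two hF) hα).isUnit]
  simp only [one_pow, inv_one, mul_one, gaussSum_one_left hψ.ne_one, jacobiSum_one_one]
  ring

variable [CharZero R]

lemma gaussSum_mul_gaussSum_mul_quadraticChar (hF : ringChar F ≠ 2) (χ : MulChar F R)
    {ψ : AddChar F R} (hψ : ψ.IsPrimitive) :
    χ 4 * (gaussSum χ ψ * gaussSum (χ * φ) ψ) = gaussSum φ ψ * gaussSum (χ ^ 2) ψ := by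
  have hφ : φ ^ 2 = 1 := ((quadraticChar_isQuadratic F).comp _).sq_eq_one
  by_cases h1 : χ = 1
  · rw [h1, MulChar.one_apply (four_ne_zero_of_ringChar_ne_two hF).isUnit, one_mul, one_mul,
      one_pow, mul_comm]
  by_cases h2 : χ ^ 2 = 1
  · rw [eq_quadraticChar_of_sq_eq_one hF h2 h1, MulChar.apply_four_of_sq_eq_one hF hφ, ← sq, hφ]
    ring
  have hχφ : χ * φ ≠ 1 := fun h ↦ h2 <| by
    rw [eq_inv_of_mul_eq_one_left h, ((quadraticChar_isQuadratic F).comp _).inv, hφ]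
  have hJχχ := jacobiSum_mul_nontrivial (sq χ ▸ h2) ψ
  have hJχφ := jacobiSum_mul_nontrivial hχφ ψ
  rw [← sq] at hJχχ
  rw [jacobiSum_quadraticChar hF h1] at hJχφ
  have hg : gaussSum χ ψ ≠ 0 :=
    gaussSum_ne_zero_of_nontrivial (Nat.cast_ne_zero.mpr Fintype.card_ne_zero) h1 hψ
  apply mul_left_cancel₀ hg
  linear_combination (-(χ 4 * gaussSum (χ * φ) ψ)) * hJχχ + gaussSum (χ ^ 2) ψ * hJχφ

lemma gaussSum_product_of_sq_ne_one (hF : ringChar F ≠ 2) {m : ℕ} (hm : 2 ≤ m)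
    {χ : MulChar F R} (h2 : χ ^ 2 ≠ 1) {ψ : AddChar F R} (hψ : ψ.IsPrimitive) (α : F) :
    gaussSum (χ ^ m) ψ * gaussSum (φ * χ⁻¹) ψ * gaussSum χ⁻¹ ψ * gaussSum (χ⁻¹ ^ (m - 2)) ψ *
        χ α =
      gaussSum φ ψ * (Fintype.card F * (jacobiSum (χ ^ m) (χ⁻¹ ^ (m - 2)) * χ (4 * α))) := by
  have hprod : χ ^ m * χ⁻¹ ^ (m - 2) = χ ^ 2 := by
    rw [← Nat.add_sub_cancel' hm, pow_add, Nat.add_sub_cancel_left, inv_pow, mul_inv_cancel_right]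
  have hJ := jacobiSum_mul_nontrivial (hprod ▸ h2) ψ
  rw [hprod] at hJ
  have hHD := gaussSum_mul_gaussSum_mul_quadraticChar hF χ⁻¹ hψ
  rw [inv_pow] at hHD
  have hcard := gaussSum_mul_gaussSum_inv h2 hψ
  rw [χ.pow_apply' two_ne_zero, ← map_pow, neg_one_sq, map_one, one_mul] at hcard
  have h4 : χ 4 * χ⁻¹ 4 = 1 := by
    rw [MulChar.inv_apply', ← map_mul, mul_inv_cancel₀ (four_ne_zero_of_ringChar_ne_two hF),
      map_one]
  rw [map_mul, mul_comm φ]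
  linear_combination (-(gaussSum (χ⁻¹ * φ) ψ * gaussSum χ⁻¹ ψ * χ α)) * hJ
    - gaussSum (χ⁻¹ * φ) ψ * gaussSum χ⁻¹ ψ * χ α * gaussSum (χ ^ 2) ψ *
        jacobiSum (χ ^ m) (χ⁻¹ ^ (m - 2)) * h4
    + χ 4 * χ α * jacobiSum (χ ^ m) (χ⁻¹ ^ (m - 2)) * gaussSum (χ ^ 2) ψ * hHD
    + χ 4 * χ α * jacobiSum (χ ^ m) (χ⁻¹ ^ (m - 2)) * gaussSum φ ψ * hcard

lemma gaussSum_product_quadraticChar (hF : ringChar F ≠ 2) {m : ℕ} (hm : 2 ≤ m)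
    {ψ : AddChar F R} (hψ : ψ.IsPrimitive) (α : F) :
    gaussSum (φ ^ m) ψ * gaussSum (φ * φ⁻¹) ψ * gaussSum φ⁻¹ ψ * gaussSum (φ⁻¹ ^ (m - 2)) ψ *
        φ α =
      gaussSum φ ψ * (Fintype.card F * (jacobiSum (φ ^ m) (φ⁻¹ ^ (m - 2)) * φ (4 * α))) -
        gaussSum φ ψ * (Fintype.card F - 1) ^ 2 * (φ α * if φ ^ m = 1 then 1 else 0) := by
  have hq : (φ).IsQuadratic := (quadraticChar_isQuadratic F).comp _
  have hpow : φ ^ (m - 2) = φ ^ m := by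
    rw [← Nat.sub_add_cancel hm, pow_add, hq.sq_eq_one, mul_one, Nat.add_sub_cancel]
  rw [mul_inv_cancel, hq.inv, hpow, map_mul, MulChar.apply_four_of_sq_eq_one hF hq.sq_eq_one,
    one_mul, gaussSum_one_left hψ.ne_one]
  rcases Nat.even_or_odd m with hm | hm
  · rw [hq.pow_even hm, if_pos rfl, gaussSum_one_left hψ.ne_one, jacobiSum_one_one]
    ring
  · have hne := quadraticChar_ringHomComp_ne_one (R := R) hF
    have hJ := jacobiSum_nontrivial_inv hne
    rw [hq.inv] at hJ
    rw [hq.pow_odd hm, if_neg hne, hJ]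
    linear_combination (-(gaussSum φ ψ * φ α)) * gaussSum_sq hne hq hψ

lemma gaussSum_product_eq (hF : ringChar F ≠ 2) {m : ℕ} (hm : 2 ≤ m) {ψ : AddChar F R}
    (hψ : ψ.IsPrimitive) {α : F} (hα : α ≠ 0) (χ : MulChar F R) :
    gaussSum (χ ^ m) ψ * gaussSum (φ * χ⁻¹) ψ * gaussSum χ⁻¹ ψ * gaussSum (χ⁻¹ ^ (m - 2)) ψ *
        χ α =
      gaussSum φ ψ * (Fintype.card F * (jacobiSum (χ ^ m) (χ⁻¹ ^ (m - 2)) * χ (4 * α))) -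
        gaussSum φ ψ * (Fintype.card F - 1) ^ 2 * ((if χ = 1 then 1 else 0) +
          if χ = φ then φ α * (if φ ^ m = 1 then 1 else 0) else 0) := by
  have hφ1 := quadraticChar_ringHomComp_ne_one (R := R) hF
  by_cases h1 : χ = 1
  · rw [h1, if_pos rfl, if_neg hφ1.symm, gaussSum_product_one hF m hψ hα]
    ring
  by_cases hφ : χ = φ
  · rw [hφ, if_neg hφ1, if_pos rfl, gaussSum_product_quadraticChar hF hm hψ]
    ring
  have h2 : χ ^ 2 ≠ 1 := fun h2 ↦ hφ (eq_quadraticChar_of_sq_eq_one hF h2 h1)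
  rw [if_neg h1, if_neg hφ, gaussSum_product_of_sq_ne_one hF hm h2 hψ]
  ring

end GaussSumProduct

lemma gsum_eq_gaussSum {p : ℕ} [Fact p.Prime] {ζ : ℂ} (hζ : IsPrimitiveRoot ζ p)
    (χ : MulChar (ZMod p) ℂ) : gsum p ζ χ = gaussSum χ (AddChar.zmodChar p hζ.pow_eq_one) := by
  simp only [gsum, gaussSum, AddChar.zmodChar_apply]

theorem sum_gauss_to_jacobi_general (p : ℕ) [Fact p.Prime] (hp : Odd p) (n : ℕ) (hn : 1 ≤ n)
    (ζ : ℂ) (hζ : IsPrimitiveRoot ζ p)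
    (φ : MulChar (ZMod p) ℂ)
    (hφ : φ = (quadraticChar (ZMod p)).ringHomComp (Int.castRingHom ℂ))
    (α : ZMod p) (hα : α ≠ 0) :
    ∑ χ : MulChar (ZMod p) ℂ,
        gsum p ζ (χ ^ (3 * n)) * gsum p ζ (φ * χ⁻¹) * gsum p ζ χ⁻¹ *
          gsum p ζ (χ⁻¹ ^ (3 * n - 2)) * χ α =
      gsum p ζ φ *
        ((p : ℂ) * (∑ χ : MulChar (ZMod p) ℂ,
            jacobiSum (χ ^ (3 * n)) (χ⁻¹ ^ (3 * n - 2)) * χ (4 * α)) -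
          ((p : ℂ) - 1) ^ 2 * (1 + φ α * (if φ ^ n = 1 then 1 else 0))) := by
  have hF : ringChar (ZMod p) ≠ 2 := by
    rw [ZMod.ringChar_zmod_n]
    rintro rfl
    exact absurd hp (by decide)
  have hψ := AddChar.zmodChar_primitive_of_primitive_root p hζ
  have hpow : φ ^ (3 * n) = φ ^ n := by
    rw [hφ, show 3 * n = 2 * n + n by ring, pow_add, pow_mul,
      ((quadraticChar_isQuadratic _).comp _).sq_eq_one, one_pow, one_mul]
  subst hφ
  simp only [gsum_eq_gaussSum hζ, gaussSum_product_eq hF (by omega : 2 ≤ 3 * n) hψ hα,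
    sum_sub_distrib, ← mul_sum, sum_add_distrib, Fintype.sum_ite_eq', hpow, ZMod.card]
  ring

theorem sum_gauss_to_jacobi (p : ℕ) [Fact p.Prime] (hp : Odd p) (n : ℕ) (hn : 1 ≤ n)
    (hdvd : ¬ (p ∣ 3 * n * (3 * n - 2))) (ζ : ℂ) (hζ : IsPrimitiveRoot ζ p)
    (φ : MulChar (ZMod p) ℂ)
    (hφ : φ = (quadraticChar (ZMod p)).ringHomComp (Int.castRingHom ℂ))
    (α : ZMod p) (hα : α ≠ 0) :
    ∑ χ : MulChar (ZMod p) ℂ,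
        gsum p ζ (χ ^ (3 * n)) * gsum p ζ (φ * χ⁻¹) * gsum p ζ χ⁻¹ *
          gsum p ζ (χ⁻¹ ^ (3 * n - 2)) * χ α =
      gsum p ζ φ *
        ((p : ℂ) * (∑ χ : MulChar (ZMod p) ℂ,
            jacobiSum (χ ^ (3 * n)) (χ⁻¹ ^ (3 * n - 2)) * χ (4 * α)) -
          ((p : ℂ) - 1) ^ 2 * (1 + φ α * (if φ ^ n = 1 then 1 else 0))) :=
  sum_gauss_to_jacobi_general p hp n hn ζ hζ φ hφ α hα
end

section
/- Let p be an odd prime, φ its quadratic character, and α ∈ F_p^×. Define A := Σ_{χ} g(χ³)·g(φχ̄)·g(χ̄)·g(χ̄)·χ(α) over all multiplicative characters χ of F_p (this is C(1,x) with 3n=3, 3n-2=1). Then A + (p-1)²·g(φ)·(1 + φ(α)·δ(φ)) = r·p·(p-1)·g(φ), where r = #{y ∈ F_p : y³ - 2y² + y + 4α = 0} and δ(φ) = 0 since φ is nontrivial; i.e., A = (p-1)·g(φ)·(rp - (p-1)). -/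
open Finset
open scoped Classical

section Helpers

variable {p : ℕ} [Fact p.Prime]

private noncomputable def qc (p : ℕ) [Fact p.Prime] : MulChar (ZMod p) ℂ :=
  (quadraticChar (ZMod p)).ringHomComp (Int.castRingHom ℂ)

private lemma orth (b : ZMod p) :
    ∑ χ : MulChar (ZMod p) ℂ, χ b = if b = 1 then ((p:ℂ)-1) else 0 := by
  have hp1 : p.Prime := Fact.out
  rw [DirichletCharacter.sum_characters_eq ℂ (n := p) b, Nat.totient_prime hp1]
  split_ifs
  · rw [Nat.cast_sub hp1.one_lt.le]; norm_num
  · rfl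

private lemma e_add {ζ : ℂ} (hζ : IsPrimitiveRoot ζ p) (a b : ZMod p) :
    ζ ^ (a + b).val = ζ ^ a.val * ζ ^ b.val := by
  have : NeZero p := ⟨(Fact.out : p.Prime).ne_zero⟩
  have h := AddChar.map_add_eq_mul (AddChar.zmodChar p (ζ := ζ) hζ.pow_eq_one) a b
  simpa only [AddChar.zmodChar_apply] using h

private lemma e_sum {ζ : ℂ} (hp : 3 < p) (hζ : IsPrimitiveRoot ζ p) :
    ∑ x : ZMod p, ζ ^ x.val = 0 := by
  have : NeZero p := ⟨(Fact.out : p.Prime).ne_zero⟩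
  have h : ∑ x : ZMod p, ζ ^ x.val = ∑ i ∈ Finset.range p, ζ ^ i := by
    refine Finset.sum_nbij' (fun x => x.val) (fun i => (i : ZMod p)) ?_ ?_ ?_ ?_ ?_ <;>
      intros <;> simp_all [ZMod.val_lt, Nat.mod_eq_of_lt, ZMod.val_cast_of_lt,
        Finset.mem_range, ZMod.natCast_val, ZMod.cast_id]
  rw [h]
  exact hζ.geom_sum_eq_zero (by omega)

private lemma fiber_sum {F : Type*} [Fintype F] [DecidableEq F] (s : Finset F) (f : F → F) (g : F → ℂ) :
    ∑ c ∈ s, g (f c) = ∑ t : F, ((s.filter fun c => f c = t).card : ℂ) * g t := by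
  have h1 : ∀ c ∈ s, g (f c) = ∑ t : F, if f c = t then g t else 0 := by
    intro c _; rw [Finset.sum_ite_eq]; simp
  rw [Finset.sum_congr rfl h1, Finset.sum_comm]
  refine Finset.sum_congr rfl fun t _ => ?_
  rw [← Finset.sum_filter]
  simp [Finset.sum_const, mul_comm]

private lemma ringChar_ne_two (hp : 3 < p) : ringChar (ZMod p) ≠ 2 := by
  rw [ZMod.ringChar_zmod_n]; omega

private lemma twoNeZero (hp : 3 < p) : (2 : ZMod p) ≠ 0 := by
  intro h
  have h2 : ((2:ℕ) : ZMod p) = 0 := by exact_mod_cast h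
  have : (p:ℕ) ∣ 2 := (ZMod.natCast_eq_zero_iff 2 p).mp h2
  have := Nat.le_of_dvd (by norm_num) this; omega

private lemma fourNeZero (hp : 3 < p) : (4 : ZMod p) ≠ 0 := by
  have h2 := twoNeZero hp
  intro h; apply h2
  have h4 : (4 : ZMod p) = 2 * 2 := by norm_num
  rw [h4] at h; rcases mul_eq_zero.mp h with h | h <;> exact h

private lemma qc_ne_one (hp : 3 < p) : qc p ≠ 1 := by
  rw [qc, Ne, MulChar.ringHomComp_eq_one_iff (Int.cast_injective)]
  exact quadraticChar_ne_one (ringChar_ne_two hp)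

private lemma qc_sum_zero (hp : 3 < p) : ∑ x : ZMod p, qc p x = 0 :=
  MulChar.sum_eq_zero_of_ne_one (qc_ne_one hp)

private lemma qc_sq (a : ZMod p) (ha : a ≠ 0) : qc p (a * a) = 1 := by
  have h := quadraticChar_sq_one (F := ZMod p) ha
  have h2 : qc p (a * a) = (((quadraticChar (ZMod p) a)^2 : ℤ) : ℂ) := by
    rw [map_mul]
    simp [qc, MulChar.ringHomComp_apply]; ring
  rw [h2, h]; norm_num

private lemma qc_zero : qc p (0 : ZMod p) = 0 := by simp [qc]

private lemma qc_ne_zero (a : ZMod p) (ha : a ≠ 0) : qc p a ≠ 0 := by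
  intro h
  have := qc_sq a ha
  rw [map_mul, h, zero_mul] at this
  exact zero_ne_one this

private lemma qc_inv (a : ZMod p) : qc p a⁻¹ = qc p a := by
  by_cases ha : a = 0
  · rw [ha, inv_zero]
  · have h1 : qc p a * qc p a⁻¹ = 1 := by
      rw [← map_mul, mul_inv_cancel₀ ha, map_one]
    have h2 : qc p a * qc p a = 1 := by rw [← map_mul]; exact qc_sq a ha
    exact mul_left_cancel₀ (qc_ne_zero a ha) (h1.trans h2.symm)

private lemma sqrt_count (hp : 3 < p) (v : ZMod p) :
    ((univ.filter fun x : ZMod p => x ^ 2 = v).card : ℂ) = 1 + qc p v := by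
  have h := quadraticChar_card_sqrts (F := ZMod p) (ringChar_ne_two hp) v
  have hset : {x : ZMod p | x ^ 2 = v}.toFinset = univ.filter fun x : ZMod p => x ^ 2 = v := by
    ext x; simp
  rw [hset] at h
  have := congrArg (fun z : ℤ => (z : ℂ)) h
  simp only [Int.cast_natCast, Int.cast_add, Int.cast_one] at this
  rw [this, qc, MulChar.ringHomComp_apply]
  simp [Int.castRingHom]; ring

private lemma lemR (hp : 3 < p) (e0 : ZMod p) :
    ∑ w : ZMod p, qc p (w ^ 2 - e0) = if e0 = 0 then ((p:ℂ) - 1) else -1 := by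
  split_ifs with he
  · subst he
    have h1 : ∀ w : ZMod p, qc p (w ^ 2 - 0) = if w = 0 then 0 else 1 := by
      intro w
      split_ifs with hw
      · simp [hw, qc_zero]
      · rw [sub_zero, sq]; exact qc_sq w hw
    rw [Finset.sum_congr rfl fun w _ => h1 w]
    rw [Finset.sum_ite, Finset.sum_const, Finset.sum_const]
    have h2 : (univ.filter fun w : ZMod p => ¬ w = 0) = univ.erase 0 := by
      ext x; simp [Finset.mem_erase]
    rw [h2, Finset.card_erase_of_mem (Finset.mem_univ 0)]
    have h3 : (1:ℕ) ≤ p := by omega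
    simp only [smul_zero, zero_add, nsmul_eq_mul, mul_one, Finset.card_univ, ZMod.card]
    push_cast [Nat.cast_sub h3]; ring
  · have step1 : ∑ w : ZMod p, qc p (w ^ 2 - e0)
        = ∑ t : ZMod p, ((univ.filter fun w : ZMod p => w ^ 2 = t).card : ℂ) * qc p (t - e0) :=
      fiber_sum univ (fun w : ZMod p => w ^ 2) (fun t => qc p (t - e0))
    have step2 : ∀ t : ZMod p, ((univ.filter fun w : ZMod p => w ^ 2 = t).card : ℂ) * qc p (t - e0)
        = qc p (t - e0) + qc p (t * (t - e0)) := by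
      intro t
      rw [sqrt_count hp t, map_mul]; ring
    rw [step1, Finset.sum_congr rfl fun t _ => step2 t, Finset.sum_add_distrib]
    have h3 : ∑ t : ZMod p, qc p (t - e0) = 0 := by
      have := Fintype.sum_equiv (Equiv.subRight e0) (fun t : ZMod p => qc p (t - e0))
        (fun t => qc p t) (fun t => rfl)
      rw [this]; exact qc_sum_zero hp
    rw [h3, zero_add]
    have h4 : ∑ t : ZMod p, qc p (t * (t - e0))
        = ∑ t ∈ univ.filter (fun t : ZMod p => t ≠ 0), qc p (t * (t - e0)) := by
      refine (Finset.sum_subset (Finset.filter_subset _ _) fun x _ hx => ?_).symm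
      simp only [Finset.mem_filter, Finset.mem_univ, true_and, not_not] at hx
      simp [hx, qc_zero]
    rw [h4]
    have h5 : ∀ t ∈ univ.filter (fun t : ZMod p => t ≠ 0),
        qc p (t * (t - e0)) = qc p (1 - e0 * t⁻¹) := by
      intro t ht
      simp only [Finset.mem_filter, Finset.mem_univ, true_and] at ht
      have key : t * (t - e0) = (t * t) * (1 - e0 * t⁻¹) := by
        field_simp
      rw [key, map_mul, qc_sq t ht, one_mul]
    rw [Finset.sum_congr rfl h5]
    have h6 : ∑ t ∈ univ.filter (fun t : ZMod p => t ≠ 0), qc p (1 - e0 * t⁻¹)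
        = ∑ s ∈ univ.filter (fun s : ZMod p => s ≠ 0), qc p (1 - s) := by
      refine Finset.sum_nbij' (fun t => e0 * t⁻¹) (fun s => e0 * s⁻¹) ?_ ?_ ?_ ?_ ?_ <;>
        intro x hx <;> simp only [Finset.mem_filter, Finset.mem_univ, true_and] at hx ⊢
      · exact mul_ne_zero he (inv_ne_zero hx)
      · exact mul_ne_zero he (inv_ne_zero hx)
      all_goals field_simp
    rw [h6]
    have h7 : (univ.filter fun s : ZMod p => s ≠ 0) = univ.erase 0 := by
      ext x; simp [Finset.mem_erase]
    rw [h7]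
    have h8 : ∑ s ∈ univ.erase 0, qc p (1 - s) + qc p (1 - 0) = ∑ s : ZMod p, qc p (1 - s) :=
      Finset.sum_erase_add univ _ (Finset.mem_univ 0)
    have h9 : ∑ s : ZMod p, qc p (1 - s) = 0 := by
      have := Fintype.sum_equiv (Equiv.subLeft 1) (fun t : ZMod p => qc p (1 - t))
        (fun t => qc p t) (fun t => rfl)
      rw [this]; exact qc_sum_zero hp
    have h10 : qc p (1 - 0) = 1 := by rw [sub_zero, map_one]
    rw [h9, h10] at h8
    linear_combination h8

private lemma lemQ (hp : 3 < p) (a : ZMod p) (ha : a ≠ 0) (B C : ZMod p) :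
    ∑ v : ZMod p, qc p (a^2 * v^2 + B * v + C)
      = if B^2 - 4 * a^2 * C = 0 then ((p:ℂ) - 1) else -1 := by
  have h2 : (2 : ZMod p) ≠ 0 := twoNeZero hp
  set e0 : ZMod p := (B^2 - 4 * a^2 * C) / (4 * a^2) with he0
  have h4a : (4 : ZMod p) * a^2 ≠ 0 := mul_ne_zero (fourNeZero hp) (pow_ne_zero 2 ha)
  have key : ∀ v : ZMod p, a^2 * v^2 + B * v + C = (a * v + B / (2 * a))^2 - e0 := by
    intro v; rw [he0]; have h4 := fourNeZero hp; field_simp; ring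
  rw [Finset.sum_congr rfl fun v _ => congrArg (qc p) (key v)]
  have hbij : ∑ v : ZMod p, qc p ((a * v + B / (2 * a))^2 - e0)
      = ∑ w : ZMod p, qc p (w^2 - e0) := by
    refine Fintype.sum_bijective (fun v : ZMod p => a * v + B / (2 * a)) ?_ _ _ (fun v => rfl)
    constructor
    · intro x y hxy
      simp only at hxy
      exact mul_left_cancel₀ ha (add_right_cancel hxy)
    · intro w
      exact ⟨(w - B / (2 * a)) / a, by field_simp; ring⟩
  rw [hbij, lemR hp e0]
  have hiff : e0 = 0 ↔ B^2 - 4 * a^2 * C = 0 := by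
    rw [he0, div_eq_zero_iff]
    constructor
    · rintro (h | h)
      · exact h
      · exact absurd h h4a
    · intro h; left; exact h
  by_cases h1 : B^2 - 4 * a^2 * C = 0
  · rw [if_pos (hiff.mpr h1), if_pos h1]
  · rw [if_neg (fun hc => h1 (hiff.mp hc)), if_neg h1]

private lemma quad_count (hp : 3 < p) (B C : ZMod p) :
    ((univ.filter fun c : ZMod p => c^2 + B*c + C = 0).card : ℂ) = 1 + qc p (B^2 - 4*C) := by
  have h2 := twoNeZero hp
  have hcard : (univ.filter fun c : ZMod p => c^2 + B*c + C = 0).card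
      = (univ.filter fun w : ZMod p => w^2 = B^2 - 4*C).card := by
    refine Finset.card_nbij' (fun c => 2*c + B) (fun w => (w - B)/2) ?_ ?_ ?_ ?_ <;>
      intro x hx <;> simp only [Finset.mem_coe, Finset.mem_filter, Finset.mem_univ, true_and] at hx ⊢
    · linear_combination 4 * hx
    · have h4 : (4 : ZMod p) ≠ 0 := fourNeZero hp
      have hdm : ((x - B)/2) * 2 = x - B := div_mul_cancel₀ _ h2
      have key : (4:ZMod p) * (((x - B)/2)^2 + B*((x-B)/2) + C) = 0 := by
        calc (4:ZMod p) * (((x - B)/2)^2 + B*((x-B)/2) + C)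
            = (((x-B)/2)*2)^2 + B*(((x-B)/2)*2)*2 + 4*C := by ring
          _ = (x-B)^2 + B*(x-B)*2 + 4*C := by rw [hdm]
          _ = 0 := by linear_combination hx
      rcases mul_eq_zero.mp key with h | h
      · exact absurd h h4
      · exact h
    · field_simp; ring
    · field_simp; ring
  rw [hcard, sqrt_count hp]

private lemma lemT (hp : 3 < p) (α : ZMod p) (hα : α ≠ 0) :
    ∑ u : ZMod p, ∑ v : ZMod p, qc p ((1 + u + v) * (u^2 * v - 4*α))
      = ((univ.filter fun y : ZMod p => y^3 - 2*y^2 + y + 4*α = 0).card : ℂ) * p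
        - ((p:ℂ) - 1) := by
  have h4 := fourNeZero hp
  have inner : ∀ u : ZMod p, ∑ v : ZMod p, qc p ((1 + u + v) * (u^2 * v - 4*α))
      = if u = 0 then 0 else (if u^3 + u^2 + 4*α = 0 then ((p:ℂ) - 1) else -1) := by
    intro u
    by_cases hu : u = 0
    · rw [if_pos hu]; subst hu
      have : ∀ v : ZMod p, qc p ((1 + 0 + v) * ((0:ZMod p)^2 * v - 4*α))
          = qc p (1 + v) * qc p (-(4*α)) := by
        intro v; rw [← map_mul]; ring_nf
      rw [Finset.sum_congr rfl fun v _ => this v, ← Finset.sum_mul]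
      have hsum : ∑ v : ZMod p, qc p (1 + v) = 0 := by
        have := Fintype.sum_equiv (Equiv.addLeft 1) (fun v : ZMod p => qc p (1 + v))
          (fun t => qc p t) (fun t => rfl)
        rw [this]; exact qc_sum_zero hp
      rw [hsum, zero_mul]
    · rw [if_neg hu]
      have expand : ∀ v : ZMod p, (1 + u + v) * (u^2 * v - 4*α)
          = u^2 * v^2 + (u^2 * (1 + u) - 4*α) * v + (-(4*α) * (1 + u)) := by
        intro v; ring
      rw [Finset.sum_congr rfl fun v _ => congrArg (qc p) (expand v),
        lemQ hp u hu]
      have hdisc : (u^2 * (1 + u) - 4*α)^2 - 4 * u^2 * (-(4*α) * (1 + u))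
          = (u^2 * (1 + u) + 4*α)^2 := by ring
      have hiff : (u^2 * (1 + u) - 4*α)^2 - 4 * u^2 * (-(4*α) * (1 + u)) = 0
          ↔ u^3 + u^2 + 4*α = 0 := by
        rw [hdisc, sq_eq_zero_iff]
        constructor <;> intro h <;> linear_combination h
      by_cases hroot : u^3 + u^2 + 4*α = 0
      · rw [if_pos hroot, if_pos (hiff.mpr hroot)]
      · rw [if_neg hroot, if_neg (fun hc => hroot (hiff.mp hc))]
  rw [Finset.sum_congr rfl fun u _ => inner u]
  have hP0 : ¬ ((0:ZMod p)^3 + (0:ZMod p)^2 + 4*α = 0) := by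
    intro h
    apply mul_ne_zero h4 hα
    linear_combination h
  have split : ∀ u : ZMod p,
      (if u = 0 then 0 else (if u^3 + u^2 + 4*α = 0 then ((p:ℂ) - 1) else -1))
      = ((if u^3 + u^2 + 4*α = 0 then ((p:ℂ)) else 0) - 1) + (if u = 0 then 1 else 0) := by
    intro u
    by_cases hu : u = 0
    · subst hu
      rw [if_pos rfl, if_pos rfl, if_neg hP0]; ring
    · simp only [hu, if_false, add_zero]
      split_ifs <;> ring
  rw [Finset.sum_congr rfl fun u _ => split u]
  rw [Finset.sum_add_distrib, Finset.sum_sub_distrib]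
  have c1 : ∑ u : ZMod p, (if u^3 + u^2 + 4*α = 0 then ((p:ℂ)) else 0)
      = ((univ.filter fun u : ZMod p => u^3 + u^2 + 4*α = 0).card : ℂ) * p := by
    rw [← Finset.sum_filter]
    simp [Finset.sum_const, mul_comm]
  have c2 : (univ.filter fun u : ZMod p => u^3 + u^2 + 4*α = 0).card
      = (univ.filter fun y : ZMod p => y^3 - 2*y^2 + y + 4*α = 0).card := by
    refine (Finset.card_nbij' (fun y => y - 1) (fun u => u + 1) ?_ ?_ ?_ ?_).symm <;>
      intro x hx <;> simp only [Finset.mem_coe, Finset.mem_filter, Finset.mem_univ, true_and] at hx ⊢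
    · linear_combination hx
    · linear_combination hx
    · ring
    · ring
  have c3 : ∑ u : ZMod p, (if u = (0:ZMod p) then (1:ℂ) else 0) = 1 := by simp
  rw [c1, c2, c3]
  simp only [Finset.sum_const, Finset.card_univ, ZMod.card, nsmul_eq_mul, mul_one]
  ring

end Helpers
set_option maxHeartbeats 1600000 in
theorem C_one_value (p : ℕ) [Fact p.Prime] (hp : 3 < p) (ζ : ℂ)
    (hζ : IsPrimitiveRoot ζ p) (α : ZMod p) (hα : α ≠ 0)
    (φ : MulChar (ZMod p) ℂ)
    (hφ : φ = (quadraticChar (ZMod p)).ringHomComp (Int.castRingHom ℂ))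
    (A : ℂ)
    (hA : A = ∑ χ : MulChar (ZMod p) ℂ,
      gsum p ζ (χ ^ 3) * gsum p ζ (φ * χ⁻¹) * gsum p ζ χ⁻¹ * gsum p ζ χ⁻¹ * χ α)
    (r : ℕ)
    (hr : r = (univ.filter fun y : ZMod p =>
      y ^ 3 - 2 * y ^ 2 + y + 4 * α = 0).card) :
    A + ((p : ℂ) - 1) ^ 2 * gsum p ζ φ * (1 + φ α * (if φ = 1 then 1 else 0)) =
        (r : ℂ) * p * ((p : ℂ) - 1) * gsum p ζ φ ∧
      A = ((p : ℂ) - 1) * gsum p ζ φ * ((r : ℂ) * p - ((p : ℂ) - 1)) := by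
  have hφq : φ = qc p := hφ
  subst hφq
  set e : ZMod p → ℂ := fun x => ζ ^ x.val with heDef
  have hg : ∀ χ : MulChar (ZMod p) ℂ, gsum p ζ χ = ∑ x : ZMod p, χ x * e x := fun χ => rfl
  have heAdd : ∀ a b : ZMod p, e (a + b) = e a * e b := fun a b => e_add hζ a b
  have hNZ : NeZero p := ⟨(Fact.out : p.Prime).ne_zero⟩
  have he0 : e 0 = 1 := by simp [heDef, ZMod.val_zero]
  have hes : ∑ x : ZMod p, e x = 0 := e_sum hp hζ
  set G : ℂ := gsum p ζ (qc p) with hGdef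
  -- Step 1: expand the Gauss sums and apply orthogonality
  have collapse : ∀ H : ZMod p → ZMod p → ZMod p → ZMod p → ℂ,
      (∑ a : ZMod p, ∑ b : ZMod p, ∑ c : ZMod p, ∑ d : ZMod p, H a b c d)
        = ∑ x : ZMod p × ZMod p × ZMod p × ZMod p, H x.1 x.2.1 x.2.2.1 x.2.2.2 := by
    intro H
    rw [Fintype.sum_prod_type]
    refine Finset.sum_congr rfl fun a _ => ?_
    rw [Fintype.sum_prod_type]
    refine Finset.sum_congr rfl fun b _ => ?_
    rw [Fintype.sum_prod_type]
  have reorder : ∀ H : ZMod p → ZMod p → ZMod p → ZMod p → ℂ,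
      (∑ a : ZMod p, ∑ b : ZMod p, ∑ c : ZMod p, ∑ d : ZMod p, H d c b a)
        = ∑ a : ZMod p, ∑ b : ZMod p, ∑ c : ZMod p, ∑ d : ZMod p, H a b c d := by
    intro H
    rw [collapse (fun a b c d => H d c b a), collapse H]
    exact Fintype.sum_equiv
      ⟨fun x => (x.2.2.2, x.2.2.1, x.2.1, x.1), fun x => (x.2.2.2, x.2.2.1, x.2.1, x.1),
        fun x => rfl, fun x => rfl⟩ _ _ (fun x => rfl)
  have step1 : A = ∑ a : ZMod p, ∑ b : ZMod p, ∑ c : ZMod p, ∑ d : ZMod p,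
      (qc p b * (e a * e b * e c * e d)) *
        (if a^3 * b⁻¹ * c⁻¹ * d⁻¹ * α = 1 then ((p:ℂ)-1) else 0) := by
    have expand : ∀ χ : MulChar (ZMod p) ℂ,
        gsum p ζ (χ ^ 3) * gsum p ζ (qc p * χ⁻¹) * gsum p ζ χ⁻¹ * gsum p ζ χ⁻¹ * χ α
        = ∑ a : ZMod p, ∑ b : ZMod p, ∑ c : ZMod p, ∑ d : ZMod p,
            (qc p c * (e d * e c * e b * e a)) * χ (d^3 * c⁻¹ * b⁻¹ * a⁻¹ * α) := by
      intro χ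
      simp only [hg]
      simp only [Finset.sum_mul, Finset.mul_sum]
      refine Finset.sum_congr rfl fun a _ => Finset.sum_congr rfl fun b _ =>
        Finset.sum_congr rfl fun c _ => Finset.sum_congr rfl fun d _ => ?_
      simp only [map_mul, map_pow, MulChar.inv_apply', MulChar.coeToFun_mul, Pi.mul_apply,
        MulChar.pow_apply' χ (three_ne_zero)]
      ring
    rw [hA, Finset.sum_congr rfl fun χ _ => expand χ]
    have swap1 : ∑ χ : MulChar (ZMod p) ℂ, ∑ a : ZMod p, ∑ b : ZMod p, ∑ c : ZMod p, ∑ d : ZMod p,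
        (qc p c * (e d * e c * e b * e a)) * χ (d^3 * c⁻¹ * b⁻¹ * a⁻¹ * α)
        = ∑ a : ZMod p, ∑ b : ZMod p, ∑ c : ZMod p, ∑ d : ZMod p,
            (qc p c * (e d * e c * e b * e a)) *
              (if d^3 * c⁻¹ * b⁻¹ * a⁻¹ * α = 1 then ((p:ℂ)-1) else 0) := by
      rw [Finset.sum_comm]
      refine Finset.sum_congr rfl fun a _ => ?_
      rw [Finset.sum_comm]
      refine Finset.sum_congr rfl fun b _ => ?_
      rw [Finset.sum_comm]
      refine Finset.sum_congr rfl fun c _ => ?_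
      rw [Finset.sum_comm]
      refine Finset.sum_congr rfl fun d _ => ?_
      rw [← Finset.mul_sum, orth]
    rw [swap1]
    exact (reorder _).symm
  -- Step 2: evaluate the (c, d) double sum
  have step2 : A = ∑ a : ZMod p, ∑ b : ZMod p,
      (if a = 0 ∨ b = 0 then 0 else
        ((p:ℂ)-1) * (qc p b * (e a * e b)) *
          ∑ s : ZMod p, (1 + qc p (s^2 - 4*(a^3*α*b⁻¹))) * e s) := by
    rw [step1]
    refine Finset.sum_congr rfl fun a _ => Finset.sum_congr rfl fun b _ => ?_
    by_cases h0 : a = 0 ∨ b = 0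
    · rw [if_pos h0]
      refine Finset.sum_eq_zero fun c _ => Finset.sum_eq_zero fun d _ => ?_
      have hne : a^3 * b⁻¹ * c⁻¹ * d⁻¹ * α ≠ 1 := by
        rcases h0 with h | h <;> subst h <;> simp
      rw [if_neg hne, mul_zero]
    · rw [if_neg h0]
      push_neg at h0
      obtain ⟨ha, hb⟩ := h0
      have hmne : a^3*α*b⁻¹ ≠ 0 :=
        mul_ne_zero (mul_ne_zero (pow_ne_zero 3 ha) hα) (inv_ne_zero hb)
      have hpt : ∀ c d : ZMod p,
          (qc p b * (e a * e b * e c * e d)) *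
            (if a^3*b⁻¹*c⁻¹*d⁻¹*α = 1 then ((p:ℂ)-1) else 0)
          = (((p:ℂ)-1) * (qc p b * (e a * e b))) *
            (if a^3*b⁻¹*c⁻¹*d⁻¹*α = 1 then e c * e d else 0) := by
        intro c d
        by_cases hcd : a^3*b⁻¹*c⁻¹*d⁻¹*α = 1
        · rw [if_pos hcd, if_pos hcd]; ring
        · rw [if_neg hcd, if_neg hcd]; ring
      rw [Finset.sum_congr rfl fun c _ => Finset.sum_congr rfl fun d _ => hpt c d]
      simp only [← Finset.mul_sum]
      congr 1
      -- claimU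
      have hcond : ∀ c d : ZMod p, c ≠ 0 →
          (a^3*b⁻¹*c⁻¹*d⁻¹*α = 1 ↔ d = (a^3*α*b⁻¹) * c⁻¹) := by
        intro c d hc
        constructor
        · intro h
          by_cases hd : d = 0
          · exfalso; rw [hd] at h; simp at h
          · field_simp at h ⊢
            first
              | linear_combination h
              | linear_combination -h
              | linear_combination h.symm
        · rintro rfl
          field_simp
      have inner_d : ∀ c : ZMod p,
          (∑ d : ZMod p, if a^3*b⁻¹*c⁻¹*d⁻¹*α = 1 then e c * e d else 0)
          = if c ≠ 0 then e c * e ((a^3*α*b⁻¹) * c⁻¹) else 0 := by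
        intro c
        by_cases hc : c = 0
        · rw [if_neg (by simpa using hc)]
          refine Finset.sum_eq_zero fun d _ => ?_
          rw [if_neg (by subst hc; simp)]
        · rw [if_pos hc]
          rw [Finset.sum_congr rfl fun d _ => if_congr (hcond c d hc) rfl rfl]
          rw [Finset.sum_ite_eq' univ ((a^3*α*b⁻¹) * c⁻¹) (fun d => e c * e d)]
          simp
      rw [Finset.sum_congr rfl fun c _ => inner_d c, ← Finset.sum_filter]
      rw [Finset.sum_congr rfl fun c _ => (heAdd c ((a^3*α*b⁻¹) * c⁻¹)).symm]
      rw [fiber_sum (univ.filter fun c : ZMod p => c ≠ 0)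
        (fun c => c + (a^3*α*b⁻¹) * c⁻¹) e]
      refine Finset.sum_congr rfl fun s _ => ?_
      have hsetEq : ((univ.filter fun c : ZMod p => c ≠ 0).filter
            fun c => c + (a^3*α*b⁻¹)*c⁻¹ = s)
          = univ.filter fun c : ZMod p => c^2 + (-s)*c + (a^3*α*b⁻¹) = 0 := by
        ext c
        simp only [Finset.mem_filter, Finset.mem_univ, true_and]
        constructor
        · rintro ⟨hc, hsum⟩
          have hinv : c * c⁻¹ = 1 := mul_inv_cancel₀ hc
          linear_combination c * hsum - (a^3*α*b⁻¹) * hinv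
        · intro h
          have hc : c ≠ 0 := by
            intro hc0
            apply hmne
            subst hc0
            linear_combination h
          have hinv : c * c⁻¹ = 1 := mul_inv_cancel₀ hc
          refine ⟨hc, ?_⟩
          apply mul_left_cancel₀ hc
          linear_combination h + (a^3*α*b⁻¹) * hinv
      rw [hsetEq, quad_count hp (-s) (a^3*α*b⁻¹)]
      have harg : (-s)^2 - 4*(a^3*α*b⁻¹) = s^2 - 4*(a^3*α*b⁻¹) := by ring
      rw [harg]
  -- Step 3
  have step3 : A = ((p:ℂ)-1) * ∑ a ∈ univ.filter (fun a : ZMod p => a ≠ 0),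
      ∑ b : ZMod p, ∑ s : ZMod p, qc p (s^2 * b - 4*a^3*α) * (e a * (e b * e s)) := by
    rw [step2]
    have hrestrict : ∑ a : ZMod p, ∑ b : ZMod p,
        (if a = 0 ∨ b = 0 then 0 else
          ((p:ℂ)-1) * (qc p b * (e a * e b)) *
            ∑ s : ZMod p, (1 + qc p (s^2 - 4*(a^3*α*b⁻¹))) * e s)
        = ∑ a ∈ univ.filter (fun a : ZMod p => a ≠ 0), ∑ b : ZMod p,
          (if a = 0 ∨ b = 0 then 0 else
            ((p:ℂ)-1) * (qc p b * (e a * e b)) *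
              ∑ s : ZMod p, (1 + qc p (s^2 - 4*(a^3*α*b⁻¹))) * e s) := by
      refine (Finset.sum_subset (Finset.filter_subset _ _) fun a _ hx => ?_).symm
      simp only [Finset.mem_filter, Finset.mem_univ, true_and, not_not] at hx
      refine Finset.sum_eq_zero fun b _ => ?_
      rw [if_pos (Or.inl hx)]
    rw [hrestrict, Finset.mul_sum]
    refine Finset.sum_congr rfl fun a ha => ?_
    simp only [Finset.mem_filter, Finset.mem_univ, true_and] at ha
    rw [Finset.mul_sum]
    refine Finset.sum_congr rfl fun b _ => ?_
    by_cases hb : b = 0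
    · rw [if_pos (Or.inr hb)]
      subst hb
      have hz : ∀ s : ZMod p, qc p (s^2 * 0 - 4*a^3*α) * (e a * (e 0 * e s))
          = (qc p (0 - 4*a^3*α) * e a) * e s := by
        intro s
        have h1 : s^2 * (0:ZMod p) - 4*a^3*α = 0 - 4*a^3*α := by ring
        rw [h1, he0]; ring
      rw [Finset.sum_congr rfl fun s _ => hz s, ← Finset.mul_sum, hes, mul_zero, mul_zero]
    · rw [if_neg (by push_neg; exact ⟨ha, hb⟩)]
      have hsplit : ∑ s : ZMod p, (1 + qc p (s^2 - 4*(a^3*α*b⁻¹))) * e s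
          = ∑ s : ZMod p, qc p (s^2 - 4*(a^3*α*b⁻¹)) * e s := by
        have h1 : ∀ s : ZMod p, (1 + qc p (s^2 - 4*(a^3*α*b⁻¹))) * e s
            = e s + qc p (s^2 - 4*(a^3*α*b⁻¹)) * e s := fun s => by ring
        rw [Finset.sum_congr rfl fun s _ => h1 s, Finset.sum_add_distrib, hes, zero_add]
      rw [hsplit]
      have hinvb : b * b⁻¹ = 1 := mul_inv_cancel₀ hb
      have hcomb : ∀ s : ZMod p,
          ((p:ℂ)-1) * (qc p b * (e a * e b)) * (qc p (s^2 - 4*(a^3*α*b⁻¹)) * e s)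
          = ((p:ℂ)-1) * (qc p (s^2 * b - 4*a^3*α) * (e a * (e b * e s))) := by
        intro s
        have harg : b * (s^2 - 4*(a^3*α*b⁻¹)) = s^2 * b - 4*a^3*α := by
          linear_combination (-(4*a^3*α)) * hinvb
        rw [← harg, map_mul]; ring
      rw [Finset.mul_sum, Finset.sum_congr rfl fun s _ => hcomb s, ← Finset.mul_sum]
  -- Step 4: substitute b = a*v, s = a*u
  have step4 : ∀ a : ZMod p, a ≠ 0 →
      ∑ b : ZMod p, ∑ s : ZMod p, qc p (s^2 * b - 4*a^3*α) * (e a * (e b * e s))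
      = ∑ v : ZMod p, ∑ u : ZMod p, (qc p a * qc p (u^2*v - 4*α)) * e (a*(1+v+u)) := by
    intro a ha
    have hsubb : ∑ b : ZMod p, ∑ s : ZMod p, qc p (s^2 * b - 4*a^3*α) * (e a * (e b * e s))
        = ∑ v : ZMod p, ∑ s : ZMod p, qc p (s^2 * (a*v) - 4*a^3*α) * (e a * (e (a*v) * e s)) :=
      (Fintype.sum_equiv (Equiv.mulLeft₀ a ha)
        (fun v => ∑ s : ZMod p, qc p (s^2 * (a*v) - 4*a^3*α) * (e a * (e (a*v) * e s)))
        (fun b => ∑ s : ZMod p, qc p (s^2 * b - 4*a^3*α) * (e a * (e b * e s)))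
        (fun v => rfl)).symm
    rw [hsubb]
    refine Finset.sum_congr rfl fun v _ => ?_
    have hsubs : ∑ s : ZMod p, qc p (s^2 * (a*v) - 4*a^3*α) * (e a * (e (a*v) * e s))
        = ∑ u : ZMod p, qc p ((a*u)^2 * (a*v) - 4*a^3*α) * (e a * (e (a*v) * e (a*u))) :=
      (Fintype.sum_equiv (Equiv.mulLeft₀ a ha)
        (fun u => qc p ((a*u)^2 * (a*v) - 4*a^3*α) * (e a * (e (a*v) * e (a*u))))
        (fun s => qc p (s^2 * (a*v) - 4*a^3*α) * (e a * (e (a*v) * e s)))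
        (fun u => rfl)).symm
    rw [hsubs]
    refine Finset.sum_congr rfl fun u _ => ?_
    have harg : (a*u)^2 * (a*v) - 4*a^3*α = (a*(a*a))*(u^2*v - 4*α) := by ring
    have hq : qc p ((a*u)^2 * (a*v) - 4*a^3*α) = qc p a * qc p (u^2*v - 4*α) := by
      rw [harg, map_mul, map_mul, qc_sq a ha, mul_one]
    have hearg : e a * (e (a*v) * e (a*u)) = e (a*(1+v+u)) := by
      rw [← heAdd (a*v) (a*u), ← heAdd a (a*v + a*u)]
      exact congrArg e (by ring)
    rw [hq, hearg]
  -- Step 5: sum over a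
  have stepW : ∀ w : ZMod p,
      ∑ a ∈ univ.filter (fun a : ZMod p => a ≠ 0), qc p a * e (a * w) = qc p w * G := by
    intro w
    have hext : ∑ a ∈ univ.filter (fun a : ZMod p => a ≠ 0), qc p a * e (a * w)
        = ∑ a : ZMod p, qc p a * e (a * w) := by
      refine Finset.sum_subset (Finset.filter_subset _ _) fun x _ hx => ?_
      simp only [Finset.mem_filter, Finset.mem_univ, true_and, not_not] at hx
      rw [hx, qc_zero, zero_mul]
    rw [hext]
    by_cases hw : w = 0
    · subst hw
      have h1 : ∀ a : ZMod p, qc p a * e (a * 0) = qc p a := by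
        intro a; rw [mul_zero, he0, mul_one]
      rw [Finset.sum_congr rfl fun a _ => h1 a, qc_sum_zero hp, qc_zero, zero_mul]
    · have hsub : ∑ a : ZMod p, qc p a * e (a * w)
          = ∑ t : ZMod p, qc p (t * w⁻¹) * e t := by
        refine Fintype.sum_equiv (Equiv.mulRight₀ w hw)
          (fun a => qc p a * e (a * w)) (fun t => qc p (t * w⁻¹) * e t) fun a => ?_
        simp only [Equiv.coe_fn_mk, Equiv.mulRight₀_apply]
        rw [mul_assoc, mul_inv_cancel₀ hw, mul_one]
      rw [hsub]
      have h2 : ∀ t : ZMod p, qc p (t * w⁻¹) * e t = qc p w * (qc p t * e t) := by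
        intro t
        rw [map_mul, qc_inv]; ring
      rw [Finset.sum_congr rfl fun t _ => h2 t, ← Finset.mul_sum]
      rfl
  have step5 : A = ((p:ℂ)-1) * G *
      ∑ u : ZMod p, ∑ v : ZMod p, qc p ((1 + u + v) * (u^2 * v - 4*α)) := by
    rw [step3]
    rw [Finset.sum_congr rfl fun a ha => step4 a
      (by simpa using (Finset.mem_filter.mp ha).2)]
    have hsw1 : ∑ a ∈ univ.filter (fun a : ZMod p => a ≠ 0), ∑ v : ZMod p, ∑ u : ZMod p,
        (qc p a * qc p (u^2*v - 4*α)) * e (a*(1+v+u))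
        = ∑ v : ZMod p, ∑ u : ZMod p, ∑ a ∈ univ.filter (fun a : ZMod p => a ≠ 0),
          (qc p a * qc p (u^2*v - 4*α)) * e (a*(1+v+u)) := by
      rw [Finset.sum_comm]
      exact Finset.sum_congr rfl fun v _ => Finset.sum_comm
    rw [hsw1]
    have hinner : ∀ v u : ZMod p,
        ∑ a ∈ univ.filter (fun a : ZMod p => a ≠ 0),
          (qc p a * qc p (u^2*v - 4*α)) * e (a*(1+v+u))
        = G * qc p ((1 + u + v) * (u^2 * v - 4*α)) := by
      intro v u
      have h1 : ∀ a : ZMod p, (qc p a * qc p (u^2*v - 4*α)) * e (a*(1+v+u))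
          = qc p (u^2*v - 4*α) * (qc p a * e (a*(1+v+u))) := fun a => by ring
      rw [Finset.sum_congr rfl fun a _ => h1 a, ← Finset.mul_sum, stepW (1+v+u)]
      rw [show ((1+u+v) * (u^2*v - 4*α)) = ((1+v+u) * (u^2*v - 4*α)) from by ring, map_mul]
      ring
    rw [Finset.sum_congr rfl fun v _ => Finset.sum_congr rfl fun u _ => hinner v u]
    simp only [← Finset.mul_sum]
    rw [show (∑ v : ZMod p, ∑ u : ZMod p, qc p ((1+u+v)*(u^2*v - 4*α)))
        = ∑ u : ZMod p, ∑ v : ZMod p, qc p ((1+u+v)*(u^2*v - 4*α)) from Finset.sum_comm]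
    ring
  -- conclude
  have hAval : A = ((p:ℂ)-1) * G * ((r:ℂ) * p - ((p:ℂ)-1)) := by
    rw [step5, lemT hp α hα, hr]
  constructor
  · rw [if_neg (qc_ne_one hp), hAval]; push_cast; ring
  · rw [hAval]
end
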